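/- Let G be a finite group and p a prime. Then G has a strongly p-embedded subgroup if and only if the graph Γ_p(G) is disconnected. -/

import Mathlib

/-!
If `X` is strongly `p`-embedded, every Sylow subgroup `T` meeting `X` nontrivially lies in `X`:
an element of `T` normalizing `T ∩ X` conjugates a nontrivial `p`-subgroup of `X` back into `X`,
so it lies in `X`, and the normalizer condition in the `p`-group `T` forces `T ∩ X = T`. Hence
the Sylow subgroups contained in `X` form a union of connected components of `Γ_p(G)`; if the
graph were connected, `X` would contain every Sylow subgroup, so `p ∣ |X ∩ gXg⁻¹|` for all `g`
and `X = G`.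

Conversely, let `X` be the stabilizer of the connected component of a Sylow subgroup `S`. Since
`S` is a Sylow subgroup of `X`, every `p`-subgroup of `X` lies in some `xSx⁻¹` with `x ∈ X`,
which is in the component of `S`; so every Sylow subgroup meeting `X` nontrivially is in that
component. If `p ∣ |X ∩ gXg⁻¹|`, a Sylow subgroup meeting `X ∩ gXg⁻¹` nontrivially lies in the
components of both `S` and `gSg⁻¹`, whence `g ∈ X`. Disconnectedness makes `X` proper.
-/

/-- The graph `Γ_p(G)` whose vertices are the Sylow `p`-subgroups of `G`, two distinct
Sylow `p`-subgroups being adjacent exactly when their intersection is nontrivial. -/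
def sylowGraph (p : ℕ) (G : Type*) [Group G] : SimpleGraph (Sylow p G) where
  Adj P Q := P ≠ Q ∧ (P : Subgroup G) ⊓ (Q : Subgroup G) ≠ ⊥
  symm := ⟨fun P Q h => ⟨h.1.symm, by rw [inf_comm]; exact h.2⟩⟩
  loopless := ⟨fun P h => h.1 rfl⟩

open Pointwise

section

variable {p : ℕ} {G : Type*} [Group G]

theorem IsPGroup.dvd_card_of_ne_bot [Fact p.Prime] {R : Subgroup G} (hR : IsPGroup p R)
    (h : R ≠ ⊥) : p ∣ Nat.card R :=
  hR.card_eq_or_dvd.resolve_left fun h1 => h (Subgroup.card_eq_one.mp h1)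

theorem Sylow.exists_inf_ne_bot_of_dvd_card [Finite G] [Fact p.Prime] {H : Subgroup G}
    (h : p ∣ Nat.card H) : ∃ T : Sylow p G, (T : Subgroup G) ⊓ H ≠ ⊥ := by
  obtain ⟨P⟩ : Nonempty (Sylow p H) := inferInstance
  obtain ⟨T, hT⟩ := P.exists_comap_subtype_eq
  refine ⟨T, fun hbot => P.ne_bot_of_dvd_card h ?_⟩
  rw [← hT]
  exact Subgroup.subgroupOf_eq_bot.mpr (disjoint_iff.mpr hbot)

theorem Sylow.exists_le_smul_of_le [Finite G] [Fact p.Prime] {H R : Subgroup G} {P : Sylow p G}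
    (hP : (P : Subgroup G) ≤ H) (hR : IsPGroup p R) (hRH : R ≤ H) :
    ∃ h ∈ H, R ≤ (h • P : Sylow p G) := by
  obtain ⟨Q, hQ⟩ := (hR.comap_of_injective H.subtype Subtype.coe_injective).exists_le_sylow
  obtain ⟨h, rfl⟩ := MulAction.exists_smul_eq H (P.subtype hP) Q
  refine ⟨h, h.2, fun r hr => ?_⟩
  have := hQ (show (⟨r, hRH hr⟩ : H) ∈ R.comap H.subtype from hr)
  rwa [Sylow.smul_subtype, Sylow.coe_subtype, Subgroup.mem_subgroupOf] at this

namespace sylowGraph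

theorem reachable_of_inf_ne_bot {P Q : Sylow p G} (h : (P : Subgroup G) ⊓ Q ≠ ⊥) :
    (sylowGraph p G).Reachable P Q := by
  by_cases hPQ : P = Q
  · exact hPQ ▸ .rfl
  · exact SimpleGraph.Adj.reachable ⟨hPQ, h⟩

def conjIso (g : G) : sylowGraph p G ≃g sylowGraph p G where
  toEquiv := MulAction.toPerm g
  map_rel_iff' {P Q} := by
    simp only [sylowGraph, MulAction.toPerm_apply, Sylow.coe_subgroup_smul, ← Subgroup.smul_inf,
      ne_eq, smul_eq_iff_eq_inv_smul, Subgroup.smul_bot, inv_smul_smul]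

theorem reachable_smul_iff (g : G) {P Q : Sylow p G} :
    (sylowGraph p G).Reachable (g • P) (g • Q) ↔ (sylowGraph p G).Reachable P Q :=
  (conjIso g).reachable_iff

theorem smul_supp_connectedComponentMk (g : G) (S : Sylow p G) :
    g • ((sylowGraph p G).connectedComponentMk S).supp =
      ((sylowGraph p G).connectedComponentMk (g • S)).supp := by
  ext Q
  simp only [Set.mem_smul_set_iff_inv_smul_mem, SimpleGraph.ConnectedComponent.mem_supp_iff,
    SimpleGraph.ConnectedComponent.eq]
  rw [← reachable_smul_iff g, smul_inv_smul]

def componentStabilizer (S : Sylow p G) : Subgroup G :=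
  MulAction.stabilizer G ((sylowGraph p G).connectedComponentMk S).supp

theorem mem_componentStabilizer {S : Sylow p G} {g : G} :
    g ∈ componentStabilizer S ↔ (sylowGraph p G).Reachable S (g • S) := by
  rw [componentStabilizer, MulAction.mem_stabilizer_iff, smul_supp_connectedComponentMk,
    SimpleGraph.ConnectedComponent.supp_inj, SimpleGraph.ConnectedComponent.eq,
    SimpleGraph.reachable_comm]

theorem componentStabilizer_smul (g : G) (S : Sylow p G) :
    componentStabilizer (g • S) = MulAut.conj g • componentStabilizer S := by
  rw [componentStabilizer, ← smul_supp_connectedComponentMk,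
    MulAction.stabilizer_smul_eq_stabilizer_map_conj]
  rfl

theorem le_componentStabilizer (S : Sylow p G) : (S : Subgroup G) ≤ componentStabilizer S :=
  fun s hs => by
    rw [mem_componentStabilizer, Sylow.smul_eq_iff_mem_normalizer.mpr (Subgroup.le_normalizer hs)]

theorem reachable_of_inf_componentStabilizer_ne_bot [Finite G] [Fact p.Prime] {S U : Sylow p G}
    (h : (U : Subgroup G) ⊓ componentStabilizer S ≠ ⊥) : (sylowGraph p G).Reachable S U := by
  obtain ⟨x, hx, hUx⟩ := Sylow.exists_le_smul_of_le (le_componentStabilizer S)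
    U.isPGroup'.to_inf_left inf_le_right
  exact (mem_componentStabilizer.mp hx).trans
    (reachable_of_inf_ne_bot (ne_bot_of_le_ne_bot h (le_inf hUx inf_le_left)))

end sylowGraph

def IsStronglyEmbedded (p : ℕ) (X : Subgroup G) : Prop :=
  X ≠ ⊤ ∧ p ∣ Nat.card X ∧ ∀ g : G, p ∣ Nat.card ↥(X ⊓ MulAut.conj g • X) → g ∈ X

namespace IsStronglyEmbedded

variable [Finite G] [Fact p.Prime] {X : Subgroup G}

theorem sylow_le_of_inf_ne_bot (hX : IsStronglyEmbedded p X) {T : Sylow p G}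
    (hT : (T : Subgroup G) ⊓ X ≠ ⊥) : (T : Subgroup G) ≤ X := by
  have hnc : NormalizerCondition T :=
    Group.normalizerCondition_of_isNilpotent (h := T.isPGroup'.isNilpotent)
  rw [← Subgroup.subgroupOf_eq_top]
  refine normalizerCondition_iff_only_full_group_self_normalizing.mp hnc _
    (le_antisymm (fun s hs => ?_) Subgroup.le_normalizer)
  refine hX.2.2 s ((T.isPGroup'.to_inf_left.dvd_card_of_ne_bot hT).trans
    (Subgroup.card_dvd_of_le (le_inf inf_le_right fun x hx => ?_)))
  have := (Subgroup.mem_normalizer_iff.mp (inv_mem hs) ⟨x, hx.1⟩).mp hx.2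
  rw [Subgroup.mem_pointwise_smul_iff_inv_smul_mem]
  simpa [Subgroup.mem_subgroupOf] using this

theorem le_of_reachable (hX : IsStronglyEmbedded p X) {P Q : Sylow p G}
    (h : (sylowGraph p G).Reachable P Q) (hP : (P : Subgroup G) ≤ X) : (Q : Subgroup G) ≤ X := by
  rw [SimpleGraph.reachable_iff_reflTransGen] at h
  induction h with
  | refl => exact hP
  | tail _ hadj ih =>
    exact hX.sylow_le_of_inf_ne_bot
      (ne_bot_of_le_ne_bot hadj.2 (le_inf inf_le_right (inf_le_left.trans ih)))

theorem not_connected (hX : IsStronglyEmbedded p X) : ¬ (sylowGraph p G).Connected := by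
  intro hconn
  obtain ⟨T, hT⟩ := Sylow.exists_inf_ne_bot_of_dvd_card hX.2.1
  have hle (Q : Sylow p G) : (Q : Subgroup G) ≤ X :=
    hX.le_of_reachable (hconn T Q) (hX.sylow_le_of_inf_ne_bot hT)
  refine hX.1 (eq_top_iff.mpr fun g _ => hX.2.2 g ?_)
  have hTg : (T : Subgroup G) ≤ MulAut.conj g • X := by
    simpa [← Sylow.coe_subgroup_smul] using
      (Subgroup.pointwise_smul_le_pointwise_smul_iff (a := MulAut.conj g)).mpr (hle (g⁻¹ • T))
  exact (T.isPGroup'.dvd_card_of_ne_bot (ne_bot_of_le_ne_bot hT inf_le_left)).trans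
    (Subgroup.card_dvd_of_le (le_inf (hle T) hTg))

end IsStronglyEmbedded

open sylowGraph in
theorem exists_isStronglyEmbedded_of_not_connected [Finite G] [Fact p.Prime]
    (h : ¬ (sylowGraph p G).Connected) : ∃ X : Subgroup G, IsStronglyEmbedded p X := by
  obtain ⟨S, Q, hSQ⟩ : ∃ S Q : Sylow p G, ¬ (sylowGraph p G).Reachable S Q := by
    by_contra! hall
    exact h ⟨hall⟩
  obtain ⟨g, rfl⟩ := MulAction.exists_smul_eq G S Q
  refine ⟨componentStabilizer S, fun htop => hSQ ?_, ?_, fun x hx => ?_⟩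
  · exact mem_componentStabilizer.mp (htop ▸ Subgroup.mem_top g)
  · have hS : (S : Subgroup G) ≠ ⊥ := fun hS => by
      have : (S : Subgroup G).Normal := hS ▸ inferInstance
      exact hSQ (by rw [Sylow.smul_eq_of_normal])
    exact (S.isPGroup'.dvd_card_of_ne_bot hS).trans
      (Subgroup.card_dvd_of_le (le_componentStabilizer S))
  · obtain ⟨U, hU⟩ := Sylow.exists_inf_ne_bot_of_dvd_card hx
    rw [← componentStabilizer_smul] at hU
    have hSU := reachable_of_inf_componentStabilizer_ne_bot
      (ne_bot_of_le_ne_bot hU (inf_le_inf_left _ inf_le_left))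
    have hxSU := reachable_of_inf_componentStabilizer_ne_bot
      (ne_bot_of_le_ne_bot hU (inf_le_inf_left _ inf_le_right))
    exact mem_componentStabilizer.mpr (hSU.trans hxSU.symm)

end

/-- A finite group `G` has a strongly `p`-embedded subgroup (a proper
subgroup `X` of order divisible by `p` such that every `g ∈ G` with `p ∣ |X ∩ gXg⁻¹|`
lies in `X`) if and only if the graph `Γ_p(G)` is disconnected. -/
theorem stmt_6 {p : ℕ} (hp : p.Prime) (G : Type*) [Group G] [Finite G] :
    (∃ X : Subgroup G, X ≠ ⊤ ∧ p ∣ Nat.card X ∧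
        ∀ g : G, p ∣ Nat.card ↥(X ⊓ Subgroup.map (MulAut.conj g).toMonoidHom X) → g ∈ X) ↔
      ¬ (sylowGraph p G).Connected := by
  have := Fact.mk hp
  exact ⟨fun ⟨_, hX⟩ => IsStronglyEmbedded.not_connected hX,
    exists_isStronglyEmbedded_of_not_connected⟩
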